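/- Let S ⊆ ℤ² be a finite set such that S \ S̄_1 is nonempty. Then S \ S̄_1 is a finite union of pseudoregular digital manifolds; in particular, every point of S \ S̄_1 belongs to a surface cell contained in S \ S̄_1, and each class of the equivalence relation generated by point-connectedness of surface cells of S \ S̄_1 is a pseudoregular digital manifold. -/

import Mathlib

/-- The Chebyshev (`l∞`) distance between two grid points of `ℤ²`. -/
def chebDist (k l : ℤ × ℤ) : ℕ := max (k.1 - l.1).natAbs (k.2 - l.2).natAbs

/-- The `l∞` boundary distance of `k` with respect to a set `P ⊆ ℤ²`. -/
noncomputable def bdist (P : Set (ℤ × ℤ)) (k : ℤ × ℤ) : ℕ :=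
  sInf {n | ∃ l ∉ P, chebDist k l = n}

/-- The `i`-th distance layer `S_i = {k ∈ P : d(k;P) = i}`. -/
def layer (P : Set (ℤ × ℤ)) (i : ℕ) : Set (ℤ × ℤ) :=
  {k ∈ P | bdist P k = i}

/-- `S̄_i`: the points of `S_i` all of whose 8 neighbours `l` satisfy `d(l;P) ≤ i`. -/
def layerBar (P : Set (ℤ × ℤ)) (i : ℕ) : Set (ℤ × ℤ) :=
  {k ∈ layer P i | ∀ l, chebDist k l = 1 → bdist P l ≤ i}

/-- The surface cell with lower-left corner `k`: the four points
`{k, k+(1,0), k+(0,1), k+(1,1)}`. -/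
def surfCell (k : ℤ × ℤ) : Set (ℤ × ℤ) :=
  {k, k + (1, 0), k + (0, 1), k + (1, 1)}

/-- `c` is a surface cell of the set `S`. -/
def IsSurfCellOf (S c : Set (ℤ × ℤ)) : Prop :=
  (∃ k, c = surfCell k) ∧ c ⊆ S

/-- Two surface cells of `S` are point-connected if they share at least one point. -/
def cellAdj (S : Set (ℤ × ℤ)) (c c' : Set (ℤ × ℤ)) : Prop :=
  IsSurfCellOf S c ∧ IsSurfCellOf S c' ∧ (c ∩ c').Nonempty

/-- A finite nonempty `S ⊆ ℤ²` is a pseudoregular digital manifold if every point of `S`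
belongs to a surface cell of `S` and every two surface cells of `S` are joined by a finite
point-connected chain of surface cells of `S`. -/
def IsPseudoregular (S : Set (ℤ × ℤ)) : Prop :=
  S.Nonempty ∧ (∀ k ∈ S, ∃ c, IsSurfCellOf S c ∧ k ∈ c) ∧
    ∀ c c', IsSurfCellOf S c → IsSurfCellOf S c' →
      Relation.ReflTransGen (cellAdj S) c c'

/-!
A point `k` of `S \ S̄₁` either has boundary distance at least `2` or, lying in `S₁ \ S̄₁`,
has a neighbour of boundary distance at least `2`. Since `d(·;S)` is `1`-Lipschitz for the
`l∞` metric, every point of the closed unit ball around such a deep point `l` lies in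
`S \ S̄₁`, and that ball contains a surface cell through `k`. So the surface cells of
`S \ S̄₁` cover it, and the union of the cells in one point-connectedness class is
pseudoregular for any set whatsoever; finitely many classes cover the finite set `S \ S̄₁`.
-/

open Relation

lemma chebDist_comm (k l : ℤ × ℤ) : chebDist k l = chebDist l k := by
  simp only [chebDist]
  omega

lemma chebDist_triangle (a b c : ℤ × ℤ) : chebDist a c ≤ chebDist a b + chebDist b c := by
  simp only [chebDist]
  omega

@[simp]
lemma chebDist_self (a : ℤ × ℤ) : chebDist a a = 0 := by
  simp [chebDist]

lemma chebDist_eq_zero {a b : ℤ × ℤ} : chebDist a b = 0 ↔ a = b := by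
  simp only [chebDist, Prod.ext_iff]
  omega

section BoundaryDistance

variable {S : Set (ℤ × ℤ)}

lemma bdist_le_chebDist (k : ℤ × ℤ) {l : ℤ × ℤ} (hl : l ∉ S) : bdist S k ≤ chebDist k l :=
  Nat.sInf_le ⟨l, hl, rfl⟩

lemma exists_chebDist_eq_bdist (hS : Sᶜ.Nonempty) (k : ℤ × ℤ) :
    ∃ l ∉ S, chebDist k l = bdist S k :=
  Nat.sInf_mem (hS.image (chebDist k))

lemma mem_of_bdist_pos {k : ℤ × ℤ} (h : 0 < bdist S k) : k ∈ S := by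
  by_contra hk
  simpa using (bdist_le_chebDist k hk).trans_lt' h

lemma bdist_pos_of_mem (hS : Sᶜ.Nonempty) {k : ℤ × ℤ} (hk : k ∈ S) : 0 < bdist S k := by
  obtain ⟨l, hl, he⟩ := exists_chebDist_eq_bdist hS k
  rw [← he, Nat.pos_iff_ne_zero]
  rintro h
  exact hl (chebDist_eq_zero.mp h ▸ hk)

lemma bdist_le_chebDist_add (hS : Sᶜ.Nonempty) (k m : ℤ × ℤ) :
    bdist S k ≤ chebDist k m + bdist S m := by
  obtain ⟨l, hl, he⟩ := exists_chebDist_eq_bdist hS m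
  calc bdist S k ≤ chebDist k l := bdist_le_chebDist k hl
    _ ≤ chebDist k m + chebDist m l := chebDist_triangle _ _ _
    _ = chebDist k m + bdist S m := by rw [he]

lemma mem_diff_layerBar_of_chebDist_le_one (hS : Sᶜ.Nonempty) {l m : ℤ × ℤ}
    (hl : 2 ≤ bdist S l) (hm : chebDist m l ≤ 1) : m ∈ S \ layerBar S 1 := by
  have hlip := bdist_le_chebDist_add hS l m
  rw [chebDist_comm] at hlip
  refine ⟨mem_of_bdist_pos (by omega), fun ⟨⟨_, hm1⟩, hnbrs⟩ => ?_⟩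
  rcases eq_or_ne m l with rfl | hne
  · omega
  · have := hnbrs l (by have := mt chebDist_eq_zero.mp hne; omega)
    omega

lemma exists_chebDist_le_one_two_le_bdist (hS : Sᶜ.Nonempty) {k : ℤ × ℤ}
    (hk : k ∈ S \ layerBar S 1) : ∃ l, chebDist k l ≤ 1 ∧ 2 ≤ bdist S l := by
  obtain ⟨hkS, hkB⟩ := hk
  by_cases hdeep : 2 ≤ bdist S k
  · exact ⟨k, by simp, hdeep⟩
  have hk1 : bdist S k = 1 := by have := bdist_pos_of_mem hS hkS; omega
  by_contra! hshallow
  exact hkB ⟨⟨hkS, hk1⟩, fun l hl => by have := hshallow l hl.le; omega⟩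

end BoundaryDistance

section SurfaceCells

lemma mem_surfCell_iff {m c : ℤ × ℤ} :
    m ∈ surfCell c ↔ (m.1 = c.1 ∨ m.1 = c.1 + 1) ∧ (m.2 = c.2 ∨ m.2 = c.2 + 1) := by
  simp only [surfCell, Set.mem_insert_iff, Set.mem_singleton_iff, Prod.ext_iff,
    Prod.fst_add, Prod.snd_add]
  omega

lemma self_mem_surfCell (c : ℤ × ℤ) : c ∈ surfCell c := by
  simp [mem_surfCell_iff]

lemma exists_surfCell_mem_subset_ball {k l : ℤ × ℤ} (h : chebDist k l ≤ 1) :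
    ∃ c, k ∈ surfCell c ∧ ∀ m ∈ surfCell c, chebDist m l ≤ 1 := by
  refine ⟨(if k.1 ≤ l.1 then l.1 - 1 else l.1, if k.2 ≤ l.2 then l.2 - 1 else l.2), ?_, ?_⟩
  · simp only [chebDist] at h
    rw [mem_surfCell_iff]
    split_ifs <;> omega
  · intro m hm
    rw [mem_surfCell_iff] at hm
    simp only [chebDist] at h ⊢
    split_ifs at hm <;> omega

lemma exists_isSurfCellOf_diff_layerBar {S : Set (ℤ × ℤ)} (hS : Sᶜ.Nonempty) {k : ℤ × ℤ}
    (hk : k ∈ S \ layerBar S 1) : ∃ c, IsSurfCellOf (S \ layerBar S 1) c ∧ k ∈ c := by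
  obtain ⟨l, hkl, hl⟩ := exists_chebDist_le_one_two_le_bdist hS hk
  obtain ⟨c, hkc, hball⟩ := exists_surfCell_mem_subset_ball hkl
  exact ⟨surfCell c,
    ⟨⟨c, rfl⟩, fun m hm => mem_diff_layerBar_of_chebDist_le_one hS hl (hball m hm)⟩, hkc⟩

lemma IsSurfCellOf.mono {S T c : Set (ℤ × ℤ)} (hST : S ⊆ T) (hc : IsSurfCellOf S c) :
    IsSurfCellOf T c :=
  ⟨hc.1, hc.2.trans hST⟩

instance (S : Set (ℤ × ℤ)) : Std.Symm (cellAdj S) :=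
  ⟨fun _ _ ⟨h₁, h₂, p, hp₁, hp₂⟩ => ⟨h₂, h₁, p, hp₂, hp₁⟩⟩

end SurfaceCells

section CellClass

def cellClass (T c : Set (ℤ × ℤ)) : Set (ℤ × ℤ) :=
  ⋃₀ {c' | ReflTransGen (cellAdj T) c c'}

variable {T c : Set (ℤ × ℤ)}

lemma IsSurfCellOf.of_reflTransGen (hc : IsSurfCellOf T c) {d : Set (ℤ × ℤ)}
    (h : ReflTransGen (cellAdj T) c d) : IsSurfCellOf T d := by
  induction h with
  | refl => exact hc
  | tail _ hadj _ => exact hadj.2.1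

lemma cellClass_subset (hc : IsSurfCellOf T c) : cellClass T c ⊆ T := by
  rintro p ⟨d, hd, hpd⟩
  exact (hc.of_reflTransGen hd).2 hpd

lemma isSurfCellOf_cellClass (hc : IsSurfCellOf T c) {d : Set (ℤ × ℤ)}
    (hd : ReflTransGen (cellAdj T) c d) : IsSurfCellOf (cellClass T c) d :=
  ⟨(hc.of_reflTransGen hd).1, Set.subset_sUnion_of_mem hd⟩

lemma reflTransGen_cellAdj_cellClass (hc : IsSurfCellOf T c) {d : Set (ℤ × ℤ)}
    (hd : ReflTransGen (cellAdj T) c d) : ReflTransGen (cellAdj (cellClass T c)) c d := by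
  induction hd with
  | refl => exact .refl
  | tail hb hadj ih =>
    exact ih.tail ⟨isSurfCellOf_cellClass hc hb, isSurfCellOf_cellClass hc (hb.tail hadj),
      hadj.2.2⟩

lemma reflTransGen_of_isSurfCellOf_cellClass (hc : IsSurfCellOf T c) {d : Set (ℤ × ℤ)}
    (hd : IsSurfCellOf (cellClass T c) d) : ReflTransGen (cellAdj T) c d := by
  obtain ⟨k, rfl⟩ := hd.1
  -- the corner `k` of `d` lies in some cell `e` of the class, and `d` meets `e` there
  obtain ⟨e, he, hke⟩ := hd.2 (self_mem_surfCell k)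
  exact he.tail ⟨hc.of_reflTransGen he, hd.mono (cellClass_subset hc),
    k, hke, self_mem_surfCell k⟩

lemma isPseudoregular_cellClass (hc : IsSurfCellOf T c) : IsPseudoregular (cellClass T c) := by
  obtain ⟨k, rfl⟩ := hc.1
  refine ⟨⟨k, surfCell k, .refl, self_mem_surfCell k⟩, ?_, fun d d' hd hd' => ?_⟩
  · rintro p ⟨d, hd, hpd⟩
    exact ⟨d, isSurfCellOf_cellClass hc hd, hpd⟩
  · have hcd := reflTransGen_cellAdj_cellClass hc (reflTransGen_of_isSurfCellOf_cellClass hc hd)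
    have hcd' :=
      reflTransGen_cellAdj_cellClass hc (reflTransGen_of_isSurfCellOf_cellClass hc hd')
    exact (Std.Symm.symm _ _ hcd).trans hcd'

lemma exists_fin_iUnion_isPseudoregular (hT : T.Finite)
    (hcover : ∀ k ∈ T, ∃ c, IsSurfCellOf T c ∧ k ∈ c) :
    ∃ (n : ℕ) (M : Fin n → Set (ℤ × ℤ)), (∀ i, IsPseudoregular (M i)) ∧ T = ⋃ i, M i := by
  choose! cell hcell hmem using hcover
  obtain ⟨n, pt, hpt⟩ := hT.fin_embedding
  have hptT (i : Fin n) : pt i ∈ T := hpt ▸ Set.mem_range_self i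
  refine ⟨n, fun i => cellClass T (cell (pt i)), fun i => isPseudoregular_cellClass
    (hcell _ (hptT i)), Set.Subset.antisymm (fun k hk => ?_) (Set.iUnion_subset fun i =>
      cellClass_subset (hcell _ (hptT i)))⟩
  obtain ⟨i, rfl⟩ : k ∈ Set.range pt := hpt ▸ hk
  exact Set.mem_iUnion.mpr ⟨i, cell (pt i), .refl, hmem _ hk⟩

end CellClass

theorem stmt4_general (S : Set (ℤ × ℤ)) (hS : S.Finite) :
    (∃ (n : ℕ) (M : Fin n → Set (ℤ × ℤ)),
        (∀ i, IsPseudoregular (M i)) ∧ S \ layerBar S 1 = ⋃ i, M i) ∧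
      (∀ k ∈ S \ layerBar S 1, ∃ c, IsSurfCellOf (S \ layerBar S 1) c ∧ k ∈ c) ∧
      (∀ c, IsSurfCellOf (S \ layerBar S 1) c →
        IsPseudoregular
          (⋃₀ {c' | Relation.ReflTransGen (cellAdj (S \ layerBar S 1)) c c'})) := by
  have hcover : ∀ k ∈ S \ layerBar S 1, ∃ c, IsSurfCellOf (S \ layerBar S 1) c ∧ k ∈ c :=
    fun _ hk => exists_isSurfCellOf_diff_layerBar hS.infinite_compl.nonempty hk
  exact ⟨exists_fin_iUnion_isPseudoregular hS.sdiff hcover, hcover,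
    fun _ hc => isPseudoregular_cellClass hc⟩

/-- For a finite `S ⊆ ℤ²` with `S \ S̄_1` nonempty, `S \ S̄_1` is a finite
union of pseudoregular digital manifolds; in particular every point of `S \ S̄_1` belongs
to a surface cell contained in `S \ S̄_1`, and each class of the equivalence relation
generated by point-connectedness of surface cells of `S \ S̄_1` is a pseudoregular
digital manifold. -/
theorem stmt4 (S : Set (ℤ × ℤ)) (hS : S.Finite)
    (hne : (S \ layerBar S 1).Nonempty) :
    (∃ (n : ℕ) (M : Fin n → Set (ℤ × ℤ)),
        (∀ i, IsPseudoregular (M i)) ∧ S \ layerBar S 1 = ⋃ i, M i) ∧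
      (∀ k ∈ S \ layerBar S 1, ∃ c, IsSurfCellOf (S \ layerBar S 1) c ∧ k ∈ c) ∧
      (∀ c, IsSurfCellOf (S \ layerBar S 1) c →
        IsPseudoregular
          (⋃₀ {c' | Relation.ReflTransGen (cellAdj (S \ layerBar S 1)) c c'})) :=
  stmt4_general S hS
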